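/- Let n ≥ 2, α an invertible real n×n matrix, x̊ ∈ ℝ^n, y ≥ 0, B ∈ ℝ^{n×(n−1)} with linearly independent columns, x_c ∈ ℝ^n, and let Q ∈ ℝ^{n×(n−1)} with QᵀQ = I_{n−1} and invertible R ∈ ℝ^{(n−1)×(n−1)} satisfy αB = QR. Define ż = R⁻¹Qᵀα(x̊ − x_c), r = ‖α(x̊ − x_c)‖₂² − ‖Qᵀα(x̊ − x_c)‖₂², and suppose y² ≥ r. Let α₀ be an invertible real n×n matrix, x* ∈ ℝ^n, Δ : ℝ^n → ℝ^n, and set Δᴮ(z) = Δ(Bz + x_c). Suppose M₁, …, M_k ∈ ℝ^{n×(n−1)} (k ≥ 1) satisfy: for every z with ‖R(z − ż)‖₂ ≤ √(y² − r) there exists M in the convex hull of {M₁, …, M_k} with Δᴮ(z) − Δᴮ(ż) = M(z − ż). Then for every x in the intersection {x : ‖α(x − x̊)‖₂ ≤ y} ∩ {Bz + x_c : z ∈ ℝ^{n−1}}, ‖α₀(Δ(x) − x*)‖₂ ≤ ‖α₀(Δᴮ(ż) − x*)‖₂ + (max_{1≤j≤k} ‖α₀ M_j R⁻¹‖_{2→2})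 · √(y² − r). -/

import Mathlib

open Matrix

/-- Euclidean norm of a vector in `ℝ^n`. -/
noncomputable def enorm2 {n : ℕ} (v : Fin n → ℝ) : ℝ := Real.sqrt (∑ i, v i ^ 2)

/-- The `ℓ₂ → ℓ₂` induced operator norm of a real matrix. -/
noncomputable def opNorm2 {m n : ℕ} (A : Matrix (Fin m) (Fin n) ℝ) : ℝ :=
  ‖LinearMap.toContinuousLinearMap (Matrix.toEuclideanLin A)‖

/-!
On the slice `x = B z + x_c`, the factorization `α B = Q R` with orthonormal columns of `Q` gives
the Pythagorean identity `‖α (x - x̊)‖₂² = ‖R (z - ż)‖₂² + r`, so the slice of the ellipsoid is the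
`R`-ball of radius `√(y² - r)` about `ż`. On that ball `Δᴮ z - Δᴮ ż = M (z - ż) = (M R⁻¹) (R (z - ż))`
for some `M` in the convex hull of the `Mⱼ`; the operator norm is convex, hence maximized over the
hull at some `Mⱼ`, and the triangle inequality finishes the bound.
-/

section EuclideanNorm

variable {m n : ℕ}

lemma enorm2_eq_norm (v : Fin n → ℝ) : enorm2 v = ‖WithLp.toLp 2 v‖ := by
  simp [enorm2, EuclideanSpace.norm_eq, sq_abs]

lemma enorm2_nonneg (v : Fin n → ℝ) : 0 ≤ enorm2 v := Real.sqrt_nonneg _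

lemma enorm2_sq (v : Fin n → ℝ) : enorm2 v ^ 2 = v ⬝ᵥ v := by
  rw [enorm2, Real.sq_sqrt (by positivity)]
  simp [dotProduct, sq]

lemma enorm2_add_le (v w : Fin n → ℝ) : enorm2 (v + w) ≤ enorm2 v + enorm2 w := by
  simpa only [enorm2_eq_norm, WithLp.toLp_add] using norm_add_le _ _

lemma enorm2_mulVec_le (A : Matrix (Fin m) (Fin n) ℝ) (v : Fin n → ℝ) :
    enorm2 (A *ᵥ v) ≤ opNorm2 A * enorm2 v := by
  simpa [enorm2_eq_norm, opNorm2, toLpLin_toLp]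
    using (LinearMap.toContinuousLinearMap (toEuclideanLin A)).le_opNorm (WithLp.toLp 2 v)

lemma opNorm2_nonneg (A : Matrix (Fin m) (Fin n) ℝ) : 0 ≤ opNorm2 A := norm_nonneg _

lemma convexOn_opNorm2 : ConvexOn ℝ Set.univ (opNorm2 : Matrix (Fin m) (Fin n) ℝ → ℝ) :=
  convexOn_univ_norm.comp_linearMap
    ((LinearMap.toContinuousLinearMap (𝕜 := ℝ) (E := EuclideanSpace ℝ (Fin n))
      (F' := EuclideanSpace ℝ (Fin m))).toLinearMap ∘ₗ toEuclideanLin.toLinearMap)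

lemma opNorm2_le_iSup_of_mem_convexHull {ι : Type*} [Finite ι]
    {M : ι → Matrix (Fin m) (Fin n) ℝ} {A : Matrix (Fin m) (Fin n) ℝ}
    (hA : A ∈ convexHull ℝ (Set.range M)) : opNorm2 A ≤ ⨆ j, opNorm2 (M j) := by
  obtain ⟨_, ⟨j, rfl⟩, hj⟩ := convexOn_opNorm2.exists_ge_of_mem_convexHull (Set.subset_univ _) hA
  exact hj.trans (le_ciSup (f := fun j => opNorm2 (M j)) (Set.finite_range _).bddAbove j)

end EuclideanNorm

lemma mul_mul_mem_convexHull_range {ι l m n p : Type*} [Fintype m] [Fintype n]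
    {M : ι → Matrix m n ℝ} {A : Matrix m n ℝ} (hA : A ∈ convexHull ℝ (Set.range M))
    (P : Matrix l m ℝ) (S : Matrix n p ℝ) :
    P * A * S ∈ convexHull ℝ (Set.range fun j => P * M j * S) := by
  let f := mulRightLinearMap l ℝ S ∘ₗ mulLeftLinearMap n ℝ P
  have := f.image_convexHull (Set.range M) ▸ Set.mem_image_of_mem f hA
  simpa [f, ← Set.range_comp, Function.comp_def] using this

lemma enorm2_sq_mulVec_sub_of_transpose_mul_eq_one {m n : ℕ} {Q : Matrix (Fin n) (Fin m) ℝ}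
    (hQ : Qᵀ * Q = 1) (p : Fin m → ℝ) (w : Fin n → ℝ) :
    enorm2 (Q *ᵥ p - w) ^ 2 = enorm2 (p - Qᵀ *ᵥ w) ^ 2 + (enorm2 w ^ 2 - enorm2 (Qᵀ *ᵥ w) ^ 2) := by
  have hcross (v : Fin n → ℝ) : Q *ᵥ p ⬝ᵥ v = p ⬝ᵥ Qᵀ *ᵥ v := by
    rw [dotProduct_comm, dotProduct_mulVec, ← mulVec_transpose, dotProduct_comm]
  have hiso : Q *ᵥ p ⬝ᵥ Q *ᵥ p = p ⬝ᵥ p := by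
    rw [hcross, mulVec_mulVec, hQ, one_mulVec]
  simp only [enorm2_sq, sub_dotProduct, dotProduct_sub, hiso, hcross, dotProduct_comm w (Q *ᵥ p),
    dotProduct_comm (Qᵀ *ᵥ w) p]
  ring

lemma enorm2_sq_mulVec_slice_eq {l m n : ℕ} {α : Matrix (Fin l) (Fin n) ℝ}
    {B : Matrix (Fin n) (Fin m) ℝ} {Q : Matrix (Fin l) (Fin m) ℝ} {R : Matrix (Fin m) (Fin m) ℝ}
    (hQ : Qᵀ * Q = 1) (hR : IsUnit R) (hQR : α * B = Q * R) (z : Fin m → ℝ) (c d : Fin n → ℝ) :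
    enorm2 (α *ᵥ (B *ᵥ z + d - c)) ^ 2 =
      enorm2 (R *ᵥ (z - R⁻¹ *ᵥ (Qᵀ *ᵥ (α *ᵥ (c - d))))) ^ 2
        + (enorm2 (α *ᵥ (c - d)) ^ 2 - enorm2 (Qᵀ *ᵥ (α *ᵥ (c - d))) ^ 2) := by
  have hslice : α *ᵥ (B *ᵥ z + d - c) = Q *ᵥ (R *ᵥ z) - α *ᵥ (c - d) := by
    rw [show B *ᵥ z + d - c = B *ᵥ z - (c - d) by abel, mulVec_sub, mulVec_mulVec, hQR,
      ← mulVec_mulVec]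
  have hcenter : R *ᵥ (z - R⁻¹ *ᵥ (Qᵀ *ᵥ (α *ᵥ (c - d)))) = R *ᵥ z - Qᵀ *ᵥ (α *ᵥ (c - d)) := by
    rw [mulVec_sub, mulVec_mulVec, mul_nonsing_inv R ((isUnit_iff_isUnit_det R).mp hR), one_mulVec]
  rw [hslice, hcenter, enorm2_sq_mulVec_sub_of_transpose_mul_eq_one hQ]

theorem slice_reset_gain_bound_general {n k : ℕ}
    (α : Matrix (Fin n) (Fin n) ℝ)
    (xc : Fin n → ℝ) (y : ℝ)
    (B : Matrix (Fin n) (Fin (n - 1)) ℝ)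
    (xC : Fin n → ℝ)
    (Q : Matrix (Fin n) (Fin (n - 1)) ℝ) (hQ : Qᵀ * Q = 1)
    (R : Matrix (Fin (n - 1)) (Fin (n - 1)) ℝ) (hR : IsUnit R)
    (hQR : α * B = Q * R)
    (zc : Fin (n - 1) → ℝ)
    (hzc : zc = R⁻¹.mulVec (Qᵀ.mulVec (α.mulVec (xc - xC))))
    (r : ℝ)
    (hr : r = enorm2 (α.mulVec (xc - xC)) ^ 2
        - enorm2 (Qᵀ.mulVec (α.mulVec (xc - xC))) ^ 2)
    (α₀ : Matrix (Fin n) (Fin n) ℝ)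
    (xs : Fin n → ℝ)
    (Δ : (Fin n → ℝ) → (Fin n → ℝ))
    (M : Fin k → Matrix (Fin n) (Fin (n - 1)) ℝ)
    (hM : ∀ z : Fin (n - 1) → ℝ,
      enorm2 (R.mulVec (z - zc)) ≤ Real.sqrt (y ^ 2 - r) →
      ∃ A ∈ convexHull ℝ (Set.range M),
        Δ (B.mulVec z + xC) - Δ (B.mulVec zc + xC) = A.mulVec (z - zc)) :
    ∀ x ∈ {x : Fin n → ℝ | enorm2 (α.mulVec (x - xc)) ≤ y} ∩
        {w : Fin n → ℝ | ∃ z : Fin (n - 1) → ℝ, w = B.mulVec z + xC},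
      enorm2 (α₀.mulVec (Δ x - xs)) ≤
        enorm2 (α₀.mulVec (Δ (B.mulVec zc + xC) - xs))
          + (⨆ j : Fin k, opNorm2 (α₀ * M j * R⁻¹)) * Real.sqrt (y ^ 2 - r) := by
  rintro _ ⟨hx, z, rfl⟩
  have hz : enorm2 (R *ᵥ (z - zc)) ≤ √(y ^ 2 - r) := by
    refine Real.le_sqrt_of_sq_le ?_
    have := enorm2_sq_mulVec_slice_eq hQ hR hQR z xc xC
    rw [← hzc, ← hr] at this
    linarith [pow_le_pow_left₀ (enorm2_nonneg _) hx 2]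
  obtain ⟨A, hA, hΔ⟩ := hM z hz
  have hgain := opNorm2_le_iSup_of_mem_convexHull (mul_mul_mem_convexHull_range hA α₀ R⁻¹)
  calc enorm2 (α₀ *ᵥ (Δ (B *ᵥ z + xC) - xs))
      = enorm2 (α₀ *ᵥ (Δ (B *ᵥ zc + xC) - xs) + (α₀ * A * R⁻¹) *ᵥ (R *ᵥ (z - zc))) := by
        rw [mulVec_mulVec, Matrix.mul_assoc, nonsing_inv_mul R ((isUnit_iff_isUnit_det R).mp hR),
          Matrix.mul_one, ← mulVec_mulVec, ← hΔ, ← mulVec_add, sub_add_sub_cancel']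
    _ ≤ enorm2 (α₀ *ᵥ (Δ (B *ᵥ zc + xC) - xs)) + opNorm2 (α₀ * A * R⁻¹) * enorm2 (R *ᵥ (z - zc)) :=
        (enorm2_add_le _ _).trans (by gcongr; exact enorm2_mulVec_le _ _)
    _ ≤ _ := add_le_add le_rfl
        (mul_le_mul hgain hz (enorm2_nonneg _) ((opNorm2_nonneg _).trans hgain))

/-- **Fixed-time-slice gain bound (Theorem 2, single slice).**
Every point `x` in the intersection of the ellipsoid `{x : ‖α(x − x̊)‖₂ ≤ y}` with the
affine subspace `{Bz + x_c}`, mapped through the reset map `Δ` and measured in the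
initial norm `‖α₀ ·‖₂` about `x*`, satisfies the center-plus-radius bound. -/
theorem slice_reset_gain_bound {n k : ℕ} (hn : 2 ≤ n) (hk : 1 ≤ k)
    (α : Matrix (Fin n) (Fin n) ℝ) (hα : IsUnit α)
    (xc : Fin n → ℝ) (y : ℝ) (hy : 0 ≤ y)
    (B : Matrix (Fin n) (Fin (n - 1)) ℝ)
    (hB : LinearIndependent ℝ (fun j : Fin (n - 1) => Bᵀ j))
    (xC : Fin n → ℝ)
    (Q : Matrix (Fin n) (Fin (n - 1)) ℝ) (hQ : Qᵀ * Q = 1)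
    (R : Matrix (Fin (n - 1)) (Fin (n - 1)) ℝ) (hR : IsUnit R)
    (hQR : α * B = Q * R)
    (zc : Fin (n - 1) → ℝ)
    (hzc : zc = R⁻¹.mulVec (Qᵀ.mulVec (α.mulVec (xc - xC))))
    (r : ℝ)
    (hr : r = enorm2 (α.mulVec (xc - xC)) ^ 2
        - enorm2 (Qᵀ.mulVec (α.mulVec (xc - xC))) ^ 2)
    (hyr : r ≤ y ^ 2)
    (α₀ : Matrix (Fin n) (Fin n) ℝ) (hα₀ : IsUnit α₀)
    (xs : Fin n → ℝ)
    (Δ : (Fin n → ℝ) → (Fin n → ℝ))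
    (M : Fin k → Matrix (Fin n) (Fin (n - 1)) ℝ)
    (hM : ∀ z : Fin (n - 1) → ℝ,
      enorm2 (R.mulVec (z - zc)) ≤ Real.sqrt (y ^ 2 - r) →
      ∃ A ∈ convexHull ℝ (Set.range M),
        Δ (B.mulVec z + xC) - Δ (B.mulVec zc + xC) = A.mulVec (z - zc)) :
    ∀ x ∈ {x : Fin n → ℝ | enorm2 (α.mulVec (x - xc)) ≤ y} ∩
        {w : Fin n → ℝ | ∃ z : Fin (n - 1) → ℝ, w = B.mulVec z + xC},
      enorm2 (α₀.mulVec (Δ x - xs)) ≤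
        enorm2 (α₀.mulVec (Δ (B.mulVec zc + xC) - xs))
          + (⨆ j : Fin k, opNorm2 (α₀ * M j * R⁻¹)) * Real.sqrt (y ^ 2 - r) :=
  slice_reset_gain_bound_general α xc y B xC Q hQ R hR hQR zc hzc r hr α₀ xs Δ M hM
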